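/- Let G be a triangle-free simple graph with maximum degree at most 4 containing a 5-cycle x–y–z–u–v–x on five distinct vertices, where y, z, u have degree exactly 3, x and v have degree exactly 4, and the third neighbors y₁ of y and u₁ of u off the cycle are distinct vertices, each of degree exactly 4 and not on the cycle. Set S = {x, y, z, u, v}. If the S-reduced graph G*S admits a 2-PCF 9-coloring, then G admits a 2-PCF 9-coloring. (This shows a vertex-minimum counterexample has no 5-cycle with three consecutive 3-vertices.) -/

import Mathlib

/-- An `h`-PCF coloring of `G`: a proper coloring `φ` such that for every vertex `v`,
at least `min h (d_G(v))` colors appear on exactly one neighbor of `v`. -/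
def SimpleGraph.IsPCFColoring {V α : Type*} (G : SimpleGraph V) (h : ℕ)
    (φ : V → α) : Prop :=
  (∀ ⦃u w : V⦄, G.Adj u w → φ u ≠ φ w) ∧
  ∀ v : V, min h {u | G.Adj v u}.ncard ≤
    {c : α | {u | G.Adj v u ∧ φ u = c}.ncard = 1}.ncard

/-- `G` admits an `h`-PCF `k`-coloring. -/
def SimpleGraph.HasPCFColoring {V : Type*} (G : SimpleGraph V) (h k : ℕ) : Prop :=
  ∃ φ : V → Fin k, G.IsPCFColoring h φ

/-- The `S`-reduced graph `G*S`: delete `S`, and join two distinct nonadjacent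
vertices outside `S` that have a common neighbor in `S` (vertices of `S`
remain as isolated vertices). -/
def SimpleGraph.reduce {V : Type*} (G : SimpleGraph V) (S : Set V) :
    SimpleGraph V where
  Adj u w := u ∉ S ∧ w ∉ S ∧ u ≠ w ∧
    (G.Adj u w ∨ ∃ s ∈ S, G.Adj u s ∧ G.Adj s w)
  symm := by
    constructor
    rintro u w ⟨hu, hw, hne, h | ⟨s, hs, h1, h2⟩⟩
    · exact ⟨hw, hu, hne.symm, Or.inl h.symm⟩
    · exact ⟨hw, hu, hne.symm, Or.inr ⟨s, hs, h2.symm, h1.symm⟩⟩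
  loopless := ⟨fun u h => h.2.2.1 rfl⟩

/-!
Only the five cycle vertices are recoloured; every other vertex keeps its colour from `G*S`.
A vertex `w ∉ S` sees in `G*S` its own outside neighbours together with the other outside
neighbours of its cycle neighbours; as a cycle vertex has at most two outside neighbours, `w`
gains at most one `G*S`-neighbour per cycle neighbour. So `w` keeps two unique colours as soon
as the new colours are distinct and each new colour on `N(w) ∩ S` avoids the colours of
`N(w) \ S` whenever these are at most two. The colours of `y` and `u` need not avoid anything at
`y₁` and `u₁`: these have degree `4` but at most three neighbours in `G*S`, so `N(y₁) \ S` and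
`N(u₁) \ S` are rainbow. Choosing the colours greedily in the order `x, v, z, u, y`, each choice
has at most eight forbidden colours.
-/

open Finset

section UniqueColors

variable {V α : Type*} [DecidableEq α] {ψ ψ' : V → α} {A B : Finset V}

def uniqueColors (ψ : V → α) (A : Finset V) : Finset α :=
  (A.image ψ).filter fun c => #(A.filter (ψ · = c)) = 1

theorem mem_uniqueColors {c : α} :
    c ∈ uniqueColors ψ A ↔ ∃ a ∈ A, ψ a = c ∧ ∀ b ∈ A, ψ b = c → b = a := by
  simp only [uniqueColors, mem_filter, card_eq_one, eq_singleton_iff_unique_mem]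
  constructor
  · rintro ⟨-, a, ⟨ha, rfl⟩, hu⟩
    exact ⟨a, ha, rfl, fun b hb hbc => hu b ⟨hb, hbc⟩⟩
  · rintro ⟨a, ha, rfl, hu⟩
    exact ⟨mem_image_of_mem ψ ha, a, ⟨ha, rfl⟩, fun b hb => hu b hb.1 hb.2⟩

theorem mem_uniqueColors_iff_card_filter {c : α} :
    c ∈ uniqueColors ψ A ↔ #(A.filter (ψ · = c)) = 1 := by
  refine ⟨fun h => (mem_filter.1 h).2, fun h => mem_filter.2 ⟨?_, h⟩⟩
  obtain ⟨a, ha⟩ := card_pos.1 (h ▸ Nat.one_pos)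
  exact mem_image.2 ⟨a, (mem_filter.1 ha).1, (mem_filter.1 ha).2⟩

theorem uniqueColors_subset_image : uniqueColors ψ A ⊆ A.image ψ := filter_subset _ _

theorem uniqueColors_congr (h : ∀ a ∈ A, ψ a = ψ' a) : uniqueColors ψ A = uniqueColors ψ' A := by
  ext c
  simp only [mem_uniqueColors]
  constructor <;> rintro ⟨a, ha, rfl, hu⟩
  · exact ⟨a, ha, (h a ha).symm, fun b hb hbc => hu b hb ((h b hb).trans hbc)⟩
  · exact ⟨a, ha, h a ha, fun b hb hbc => hu b hb ((h b hb).symm.trans hbc)⟩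

variable [DecidableEq V]

theorem image_sdiff_image_subset_uniqueColors (hBA : B ⊆ A) (hB : Set.InjOn ψ B) :
    B.image ψ \ (A \ B).image ψ ⊆ uniqueColors ψ A := by
  intro c hc
  obtain ⟨hcB, hcA⟩ := mem_sdiff.1 hc
  obtain ⟨b, hb, rfl⟩ := mem_image.1 hcB
  refine mem_uniqueColors.2 ⟨b, hBA hb, rfl, fun a ha hab => ?_⟩
  by_cases haB : a ∈ B
  · exact hB haB hb hab
  · exact absurd (mem_image.2 ⟨a, mem_sdiff.2 ⟨ha, haB⟩, hab⟩) hcA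

theorem card_sub_card_sdiff_le_card_uniqueColors (hBA : B ⊆ A) (hB : Set.InjOn ψ B) :
    #B - #(A \ B) ≤ #(uniqueColors ψ A) :=
  calc #B - #(A \ B) ≤ #(B.image ψ) - #((A \ B).image ψ) := by
        rw [card_image_of_injOn hB]; exact Nat.sub_le_sub_left card_image_le _
    _ ≤ #(B.image ψ \ (A \ B).image ψ) := le_card_sdiff _ _
    _ ≤ #(uniqueColors ψ A) := card_le_card (image_sdiff_image_subset_uniqueColors hBA hB)

theorem card_le_card_uniqueColors (hBA : B ⊆ A) (hB : Set.InjOn ψ B)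
    (hdisj : Disjoint (B.image ψ) ((A \ B).image ψ)) : #B ≤ #(uniqueColors ψ A) := by
  have := card_le_card (image_sdiff_image_subset_uniqueColors hBA hB)
  rwa [sdiff_eq_self_of_disjoint hdisj, card_image_of_injOn hB] at this

theorem card_uniqueColors_of_injOn (hA : Set.InjOn ψ A) : #(uniqueColors ψ A) = #A :=
  le_antisymm ((card_le_card uniqueColors_subset_image).trans card_image_le)
    (by simpa using card_le_card_uniqueColors (Subset.refl A) hA (by simp))

theorem card_uniqueColors_le_card_add (hBA : B ⊆ A) :
    #(uniqueColors ψ A) ≤ #(uniqueColors ψ B) + #(A \ B) := by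
  have : uniqueColors ψ A ⊆ uniqueColors ψ B ∪ (A \ B).image ψ := by
    intro c hc
    obtain ⟨a, ha, rfl, hu⟩ := mem_uniqueColors.1 hc
    rw [mem_union]
    by_cases haB : a ∈ B
    · exact Or.inl (mem_uniqueColors.2 ⟨a, haB, rfl, fun b hb => hu b (hBA hb)⟩)
    · exact Or.inr (mem_image_of_mem ψ (mem_sdiff.2 ⟨ha, haB⟩))
  exact (card_le_card this).trans ((card_union_le _ _).trans (Nat.add_le_add_left card_image_le _))

theorem card_uniqueColors_insert {s : V} (hs : ψ s ∉ A.image ψ) :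
    #(uniqueColors ψ (insert s A)) = #(uniqueColors ψ A) + 1 := by
  have : uniqueColors ψ (insert s A) = insert (ψ s) (uniqueColors ψ A) := by
    ext c
    simp only [mem_insert, mem_uniqueColors, forall_eq_or_imp, exists_eq_or_imp]
    constructor
    · rintro (⟨rfl, -⟩ | ⟨a, ha, rfl, -, hu⟩)
      · exact Or.inl rfl
      · exact Or.inr ⟨a, ha, rfl, hu⟩
    · rintro (rfl | ⟨a, ha, rfl, hu⟩)
      · exact Or.inl ⟨rfl, fun _ => trivial,
          fun b hb hbs => absurd (hbs ▸ mem_image_of_mem ψ hb) hs⟩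
      · exact Or.inr ⟨a, ha, rfl, fun hsa => absurd (hsa ▸ mem_image_of_mem ψ ha) hs, hu⟩
  rw [this, card_insert_of_notMem fun h => hs (uniqueColors_subset_image h)]

theorem injOn_insert_of_notMem_image {s : V} (hA : Set.InjOn ψ A) (hs : ψ s ∉ A.image ψ) :
    Set.InjOn ψ ↑(insert s A) := by
  rw [coe_insert, Set.injOn_insert fun h => hs (mem_image_of_mem ψ h)]
  exact ⟨hA, by rwa [← coe_image, mem_coe]⟩

/-- A repeated colour leaves at most `#A - 2` elements to carry unique colours. -/
theorem injOn_of_card_le_three (hA : #A ≤ 3) (h : min 2 #A ≤ #(uniqueColors ψ A)) :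
    Set.InjOn ψ A := by
  intro a ha b hb hab
  by_contra hne
  have hsub : uniqueColors ψ A ⊆ (A \ {a, b}).image ψ := by
    intro c hc
    obtain ⟨e, he, rfl, hu⟩ := mem_uniqueColors.1 hc
    refine mem_image_of_mem ψ (mem_sdiff.2 ⟨he, fun heab => ?_⟩)
    rcases mem_insert.1 heab with rfl | h'
    · exact hne (hu b hb hab.symm).symm
    · rw [mem_singleton.1 h'] at hu; exact hne (hu a ha hab)
  have hab2 : {a, b} ⊆ A := insert_subset_iff.2 ⟨ha, singleton_subset_iff.2 hb⟩
  have h₁ := (card_le_card hsub).trans card_image_le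
  have h₂ := card_le_card hab2
  rw [card_sdiff_of_subset hab2, card_pair hne] at h₁
  rw [card_pair hne] at h₂
  omega

end UniqueColors

namespace SimpleGraph

variable {V α : Type*}

def IsPCFAt [Fintype V] [DecidableEq α] (G : SimpleGraph V) [DecidableRel G.Adj] (h : ℕ)
    (φ : V → α) (v : V) : Prop :=
  min h (G.degree v) ≤ #(uniqueColors φ (G.neighborFinset v))

variable {G : SimpleGraph V}

theorem reduce_adj {S : Set V} {u w : V} : (G.reduce S).Adj u w ↔
    u ∉ S ∧ w ∉ S ∧ u ≠ w ∧ (G.Adj u w ∨ ∃ s ∈ S, G.Adj u s ∧ G.Adj s w) :=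
  Iff.rfl

variable [Fintype V] [DecidableRel G.Adj]

theorem ncard_setOf_adj (v : V) : {w | G.Adj v w}.ncard = G.degree v := by
  rw [← card_neighborFinset_eq_degree, ← Set.ncard_coe_finset, coe_neighborFinset]
  rfl

theorem isPCFColoring_iff [DecidableEq α] {h : ℕ} {φ : V → α} :
    G.IsPCFColoring h φ ↔ (∀ ⦃u w⦄, G.Adj u w → φ u ≠ φ w) ∧ ∀ v, G.IsPCFAt h φ v := by
  refine and_congr Iff.rfl (forall_congr' fun v => ?_)
  have hcol : {c | {u | G.Adj v u ∧ φ u = c}.ncard = 1} =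
      ↑(uniqueColors φ (G.neighborFinset v)) := by
    ext c
    have : {u | G.Adj v u ∧ φ u = c} = ↑((G.neighborFinset v).filter (φ · = c)) := by
      ext u; simp
    rw [Set.mem_ofPred_eq, this, Set.ncard_coe_finset, mem_coe, mem_uniqueColors_iff_card_filter]
  rw [IsPCFAt, ncard_setOf_adj, hcol, Set.ncard_coe_finset]

variable [DecidableEq V] {S : Finset V}

theorem neighborFinset_reduce [DecidableRel (G.reduce S).Adj] {w : V} (hw : w ∉ S) :
    (G.reduce S).neighborFinset w = G.neighborFinset w \ S ∪
      (G.neighborFinset w ∩ S).biUnion fun s => (G.neighborFinset s \ S).erase w := by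
  ext a
  simp only [mem_neighborFinset, reduce_adj, mem_coe, mem_union, mem_sdiff, mem_biUnion,
    mem_inter, mem_erase]
  constructor
  · rintro ⟨-, ha, hne, h | ⟨s, hs, h₁, h₂⟩⟩
    · exact Or.inl ⟨h, ha⟩
    · exact Or.inr ⟨s, ⟨h₁, hs⟩, hne.symm, h₂, ha⟩
  · rintro (⟨h, ha⟩ | ⟨s, ⟨h₁, hs⟩, hne, h₂, ha⟩)
    · exact ⟨hw, ha, h.ne, Or.inl h⟩
    · exact ⟨hw, ha, hne.symm, Or.inr ⟨s, hs, h₁, h₂⟩⟩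

theorem mem_neighborFinset_sdiff_of_mem_inter {w s : V} (hw : w ∉ S)
    (hs : s ∈ G.neighborFinset w ∩ S) : w ∈ G.neighborFinset s \ S :=
  mem_sdiff.2 ⟨(mem_neighborFinset _ _ _).2 ((mem_neighborFinset _ _ _).1 (mem_inter.1 hs).1).symm,
    hw⟩

theorem neighborFinset_eq_insert_sdiff {w s : V} (hT : G.neighborFinset w ∩ S = {s}) :
    G.neighborFinset w = insert s (G.neighborFinset w \ S) := by
  conv_lhs => rw [← sdiff_union_inter (G.neighborFinset w) S, hT, union_comm, ← insert_eq]

theorem card_sdiff_add_two_of_inter_eq_pair {s a b : V} (hT : G.neighborFinset s ∩ S = {a, b})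
    (hab : a ≠ b) : #(G.neighborFinset s \ S) + 2 = G.degree s := by
  rw [← card_pair hab, ← hT, card_sdiff_add_card_inter, card_neighborFinset_eq_degree]

theorem sdiff_eq_singleton_of_inter_eq_pair {s a b w : V} (hT : G.neighborFinset s ∩ S = {a, b})
    (hab : a ≠ b) (hdeg : G.degree s = 3) (hsw : G.Adj s w) (hw : w ∉ S) :
    G.neighborFinset s \ S = {w} := by
  have := card_sdiff_add_two_of_inter_eq_pair hT hab
  exact (eq_of_subset_of_card_le (singleton_subset_iff.2
    (mem_sdiff.2 ⟨(mem_neighborFinset _ _ _).2 hsw, hw⟩)) (by rw [card_singleton]; omega)).symm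

theorem neighborFinset_inter_eq_of_cycle (htf : G.CliqueFree 3) {a b c d e : V} (hab : G.Adj a b)
    (hbc : G.Adj b c) (hde : G.Adj d e) (hea : G.Adj e a) (hS : S = {a, b, c, d, e}) :
    G.neighborFinset a ∩ S = {b, e} := by
  subst hS
  ext t
  simp only [mem_inter, mem_neighborFinset, mem_insert, mem_singleton]
  constructor
  · rintro ⟨h, rfl | rfl | rfl | rfl | rfl⟩
    · exact absurd h (G.loopless.irrefl _)
    · exact Or.inl rfl
    · exact (htf {a, b, t} (is3Clique_triple_iff.2 ⟨hab, h, hbc⟩)).elim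
    · exact (htf {a, t, e} (is3Clique_triple_iff.2 ⟨h, hea.symm, hde⟩)).elim
    · exact Or.inr rfl
  · rintro (rfl | rfl)
    · exact ⟨hab, by simp⟩
    · exact ⟨hea.symm, by simp⟩

theorem neighborFinset_inter_eq_of_cycle₅ (htf : G.CliqueFree 3) {a b c d e : V}
    (hab : G.Adj a b) (hbc : G.Adj b c) (hcd : G.Adj c d) (hde : G.Adj d e) (hea : G.Adj e a)
    (hS : S = {a, b, c, d, e}) :
    G.neighborFinset a ∩ S = {b, e} ∧ G.neighborFinset b ∩ S = {c, a} ∧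
      G.neighborFinset c ∩ S = {d, b} ∧ G.neighborFinset d ∩ S = {e, c} ∧
      G.neighborFinset e ∩ S = {a, d} := by
  have rot : ∀ p q r s t : V, ({p, q, r, s, t} : Finset V) = {q, r, s, t, p} := by
    intro p q r s t
    ext
    simp only [mem_insert, mem_singleton]
    tauto
  have hS₁ := hS.trans (rot a b c d e)
  have hS₂ := hS₁.trans (rot b c d e a)
  have hS₃ := hS₂.trans (rot c d e a b)
  exact ⟨neighborFinset_inter_eq_of_cycle htf hab hbc hde hea hS,
    neighborFinset_inter_eq_of_cycle htf hbc hcd hea hab hS₁,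
    neighborFinset_inter_eq_of_cycle htf hcd hde hab hbc hS₂,
    neighborFinset_inter_eq_of_cycle htf hde hea hbc hcd hS₃,
    neighborFinset_inter_eq_of_cycle htf hea hab hcd hde (hS₃.trans (rot d e a b c))⟩

theorem injOn_neighborFinset_sdiff {φ : V → α}
    (hφ : ∀ ⦃a b⦄, (G.reduce S).Adj a b → φ a ≠ φ b) {s : V} (hs : s ∈ S) :
    Set.InjOn φ ↑(G.neighborFinset s \ S) := by
  intro a ha b hb hab
  by_contra hne
  simp only [coe_sdiff, Set.mem_sdiff, mem_coe, mem_neighborFinset] at ha hb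
  exact hφ ⟨ha.2, hb.2, hne, Or.inr ⟨s, hs, ha.1.symm, hb.1⟩⟩ hab

variable [DecidableEq α] {φ φ' : V → α}

theorem adj_ne_of_reduce (hφ : ∀ ⦃a b⦄, (G.reduce S).Adj a b → φ a ≠ φ b)
    (hφ' : ∀ a ∉ S, φ' a = φ a) (hinj : Set.InjOn φ' S)
    (hcross : ∀ s ∈ S, φ' s ∉ (G.neighborFinset s \ S).image φ) :
    ∀ ⦃a b⦄, G.Adj a b → φ' a ≠ φ' b := by
  have key : ∀ ⦃a b⦄, G.Adj a b → a ∈ S → b ∉ S → φ' a ≠ φ' b := fun a b hab ha hb h =>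
    hcross a ha (mem_image.2 ⟨b, mem_sdiff.2 ⟨(mem_neighborFinset _ _ _).2 hab, hb⟩,
      (hφ' b hb ▸ h).symm⟩)
  intro a b hab
  by_cases ha : a ∈ S <;> by_cases hb : b ∈ S
  · exact fun h => hab.ne (hinj ha hb h)
  · exact key hab ha hb
  · exact fun h => key hab.symm hb ha h.symm
  · rw [hφ' a ha, hφ' b hb]
    exact hφ (reduce_adj.2 ⟨ha, hb, hab.ne, Or.inl hab⟩)

theorem isPCFAt_of_inter_eq_pair {s a b : V} (hs : s ∈ S)
    (hφ : ∀ ⦃a b⦄, (G.reduce S).Adj a b → φ a ≠ φ b) (hφ' : ∀ a ∉ S, φ' a = φ a)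
    (hinj : Set.InjOn φ' S) (hT : G.neighborFinset s ∩ S = {a, b}) (hab : a ≠ b)
    (ha : φ' a ∉ (G.neighborFinset s \ S).image φ)
    (hb : φ' b ∉ (G.neighborFinset s \ S).image φ ∨ 4 ≤ G.degree s) :
    G.IsPCFAt 2 φ' s := by
  have hdeg := card_sdiff_add_two_of_inter_eq_pair hT hab
  rw [IsPCFAt, ← card_neighborFinset_eq_degree]
  set O := G.neighborFinset s \ S
  have hN : G.neighborFinset s = insert a (insert b O) := by
    conv_lhs => rw [← sdiff_union_inter (G.neighborFinset s) S, hT, union_comm, insert_union,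
      ← insert_eq]
  have hsub : {a, b} ⊆ S := hT ▸ inter_subset_right
  have hbO : b ∉ O := fun h => (mem_sdiff.1 h).2 (hsub (mem_insert_of_mem (mem_singleton_self b)))
  have hφO : O.image φ' = O.image φ := image_congr fun c hc => hφ' c (mem_sdiff.1 hc).2
  have hOinj : Set.InjOn φ' O :=
    (injOn_neighborFinset_sdiff hφ hs).congr fun c hc => (hφ' c (mem_sdiff.1 hc).2).symm
  have haIns := injOn_insert_of_notMem_image hOinj (hφO ▸ ha)
  have haO : a ∉ O := fun h => ha (hφO ▸ mem_image_of_mem φ' h)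
  rw [hN]
  rcases hb with hb | hdeg4
  · have hab' : φ' a ≠ φ' b := fun h => hab (hinj (hsub (mem_insert_self a {b}))
      (hsub (mem_insert_of_mem (mem_singleton_self b))) h)
    have hinjN := injOn_insert_of_notMem_image (injOn_insert_of_notMem_image hOinj (hφO ▸ hb))
      (by rw [image_insert, mem_insert, not_or]; exact ⟨hab', hφO ▸ ha⟩)
    rw [card_uniqueColors_of_injOn hinjN, card_insert_of_notMem (fun h => (mem_insert.1 h).elim
      hab haO), card_insert_of_notMem hbO]
    omega
  · have hdiff : insert a (insert b O) \ insert a O ⊆ {b} := by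
      intro c hc
      simp only [mem_sdiff, mem_insert, not_or] at hc
      rcases hc with ⟨rfl | rfl | hc, hca, hcO⟩
      exacts [absurd rfl hca, mem_singleton_self c, absurd hc hcO]
    have h₁ := card_sub_card_sdiff_le_card_uniqueColors
      (insert_subset_insert a (subset_insert b O)) haIns
    have h₂ := card_le_card hdiff
    rw [card_insert_of_notMem haO] at h₁
    rw [card_singleton] at h₂
    omega

theorem isPCFAt_of_two_le_card_inter {w : V} (hφ' : ∀ a ∉ S, φ' a = φ a)
    (hinj : Set.InjOn φ' S) (hT : 2 ≤ #(G.neighborFinset w ∩ S)) (hΔ : G.degree w ≤ 4)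
    (hsafe : ∀ s ∈ G.neighborFinset w ∩ S,
      φ' s ∉ (G.neighborFinset w \ S).image φ ∨ 2 < #((G.neighborFinset w \ S).image φ)) :
    G.IsPCFAt 2 φ' w := by
  rw [IsPCFAt, ← card_neighborFinset_eq_degree]
  rw [← card_neighborFinset_eq_degree] at hΔ
  set N := G.neighborFinset w
  have hcard := card_sdiff_add_card_inter N S
  have hM : #((N \ S).image φ) ≤ 2 := card_image_le.trans (by omega)
  have hdisj : Disjoint ((N ∩ S).image φ') ((N \ (N ∩ S)).image φ') := by
    rw [sdiff_inter_self_left, image_congr fun a ha => hφ' a (mem_sdiff.1 ha).2,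
      Finset.disjoint_left]
    rintro c hc
    obtain ⟨s, hs, rfl⟩ := mem_image.1 hc
    exact (hsafe s hs).resolve_right (by omega)
  have := card_le_card_uniqueColors inter_subset_left
    (hinj.mono (by rw [coe_inter]; exact Set.inter_subset_right)) hdisj
  omega

variable [DecidableRel (G.reduce S).Adj]

theorem isPCFAt_of_inter_eq_empty {w : V} (hw : w ∉ S) (hφ' : ∀ a ∉ S, φ' a = φ a)
    (hT : G.neighborFinset w ∩ S = ∅) (hred : (G.reduce S).IsPCFAt 2 φ w) :
    G.IsPCFAt 2 φ' w := by
  have hdisj := disjoint_iff_inter_eq_empty.2 hT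
  have hN : (G.reduce S).neighborFinset w = G.neighborFinset w := by
    rw [neighborFinset_reduce hw, hT, biUnion_empty, union_empty, sdiff_eq_self_of_disjoint hdisj]
  rw [IsPCFAt, ← card_neighborFinset_eq_degree] at hred ⊢
  rwa [hN, ← uniqueColors_congr fun a ha => hφ' a (Finset.disjoint_left.1 hdisj ha)] at hred

theorem isPCFAt_of_inter_eq_singleton {w s : V} (hw : w ∉ S) (hφ' : ∀ a ∉ S, φ' a = φ a)
    (hT : G.neighborFinset w ∩ S = {s}) (hO : #(G.neighborFinset s \ S) ≤ 2)
    (hΔ : G.degree w ≤ 4) (hred : (G.reduce S).IsPCFAt 2 φ w)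
    (hsafe : φ' s ∉ (G.neighborFinset w \ S).image φ ∨
      2 < #((G.neighborFinset w \ S).image φ)) :
    G.IsPCFAt 2 φ' w := by
  set M := G.neighborFinset w \ S
  have hN : G.neighborFinset w = insert s M := neighborFinset_eq_insert_sdiff hT
  have hsT : s ∈ G.neighborFinset w ∩ S := hT ▸ mem_singleton_self s
  have hsM : s ∉ M := fun h => (mem_sdiff.1 h).2 (mem_inter.1 hsT).2
  have hφM : ∀ a ∈ M, φ' a = φ a := fun a ha => hφ' a (mem_sdiff.1 ha).2
  rw [IsPCFAt, ← card_neighborFinset_eq_degree] at hred ⊢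
  rw [← card_neighborFinset_eq_degree, hN, card_insert_of_notMem hsM] at hΔ
  rw [hN, card_insert_of_notMem hsM]
  rcases hsafe with hfresh | hrainbow
  · -- `w` sees in `G*S` the set `M` plus at most one other outside neighbour of `s`
    have hN' := neighborFinset_reduce (G := G) hw
    rw [hT, singleton_biUnion] at hN'
    have hMN' : M ⊆ (G.reduce S).neighborFinset w := hN' ▸ subset_union_left
    have hN'M : #((G.reduce S).neighborFinset w \ M) ≤ 1 := by
      rw [hN', union_sdiff_left]
      refine (card_le_card sdiff_subset).trans ?_
      rw [card_erase_of_mem (mem_neighborFinset_sdiff_of_mem_inter hw hsT)]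
      omega
    have h₁ := card_uniqueColors_le_card_add (ψ := φ) hMN'
    have h₂ := card_sdiff_add_card_eq_card hMN'
    rw [card_uniqueColors_insert (by rwa [image_congr hφM]), uniqueColors_congr hφM]
    omega
  · have hM3 : #M = 3 := le_antisymm (by omega) (hrainbow.trans_le card_image_le)
    have hinj : Set.InjOn φ' M := by
      rw [← card_image_iff, image_congr hφM]
      exact le_antisymm card_image_le (by omega)
    have := card_sub_card_sdiff_le_card_uniqueColors (subset_insert s M) hinj
    rw [insert_sdiff_of_notMem _ hsM, sdiff_self, bot_eq_empty, insert_empty, card_singleton]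
      at this
    omega

theorem isPCFAt_of_safe {w : V} (hw : w ∉ S) (hφ' : ∀ a ∉ S, φ' a = φ a)
    (hinj : Set.InjOn φ' S) (hO : ∀ s ∈ S, #(G.neighborFinset s \ S) ≤ 2)
    (hΔ : G.degree w ≤ 4) (hred : (G.reduce S).IsPCFAt 2 φ w)
    (hsafe : ∀ s ∈ G.neighborFinset w ∩ S,
      φ' s ∉ (G.neighborFinset w \ S).image φ ∨ 2 < #((G.neighborFinset w \ S).image φ)) :
    G.IsPCFAt 2 φ' w := by
  obtain hT | hT | hT : #(G.neighborFinset w ∩ S) = 0 ∨ #(G.neighborFinset w ∩ S) = 1 ∨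
      2 ≤ #(G.neighborFinset w ∩ S) := by omega
  · exact isPCFAt_of_inter_eq_empty hw hφ' (card_eq_zero.1 hT) hred
  · obtain ⟨s, hs⟩ := card_eq_one.1 hT
    have hsT : s ∈ G.neighborFinset w ∩ S := hs ▸ mem_singleton_self s
    exact isPCFAt_of_inter_eq_singleton hw hφ' hs (hO s (mem_inter.1 hsT).2) hΔ hred
      (hsafe s hsT)
  · exact isPCFAt_of_two_le_card_inter hφ' hinj hT hΔ hsafe

theorem card_neighborFinset_reduce_lt {w s₀ : V} (hw : w ∉ S)
    (hs₀ : s₀ ∈ G.neighborFinset w ∩ S) (hO₀ : G.neighborFinset s₀ \ S = {w})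
    (hO : ∀ s ∈ S, #(G.neighborFinset s \ S) ≤ 2) :
    #((G.reduce S).neighborFinset w) < G.degree w := by
  set T := G.neighborFinset w ∩ S
  have hsub : (T.biUnion fun s => (G.neighborFinset s \ S).erase w) ⊆
      (T.erase s₀).biUnion fun s => (G.neighborFinset s \ S).erase w := by
    intro a ha
    obtain ⟨s, hs, has⟩ := mem_biUnion.1 ha
    refine mem_biUnion.2 ⟨s, mem_erase.2 ⟨?_, hs⟩, has⟩
    rintro rfl
    simp [hO₀] at has
  have hle : ∀ s ∈ T.erase s₀, #((G.neighborFinset s \ S).erase w) ≤ 1 := by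
    intro s hs
    have := hO s (mem_inter.1 (mem_of_mem_erase hs)).2
    rw [card_erase_of_mem (mem_neighborFinset_sdiff_of_mem_inter hw (mem_of_mem_erase hs))]
    omega
  have hT : #(T.erase s₀) + 1 = #T := card_erase_add_one hs₀
  have hcard : #(G.neighborFinset w \ S) + #T = #(G.neighborFinset w) :=
    card_sdiff_add_card_inter _ _
  rw [neighborFinset_reduce hw, ← card_neighborFinset_eq_degree]
  calc _ ≤ #(G.neighborFinset w \ S) + #(T.erase s₀) * 1 :=
        (card_union_le _ _).trans (Nat.add_le_add_left
          ((card_le_card hsub).trans (card_biUnion_le_card_mul _ _ _ hle)) _)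
    _ < _ := by omega

theorem isPCFAt_of_pendant {w s₀ : V} (hw : w ∉ S) (hφ' : ∀ a ∉ S, φ' a = φ a)
    (hinj : Set.InjOn φ' S) (hs₀ : s₀ ∈ G.neighborFinset w ∩ S)
    (hO₀ : G.neighborFinset s₀ \ S = {w}) (hO : ∀ s ∈ S, #(G.neighborFinset s \ S) ≤ 2)
    (hdeg : G.degree w = 4) (hred : (G.reduce S).IsPCFAt 2 φ w)
    (hsafe : ∀ s ∈ (G.neighborFinset w ∩ S).erase s₀,
      φ' s ∉ (G.neighborFinset w \ S).image φ ∨ 2 < #((G.neighborFinset w \ S).image φ)) :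
    G.IsPCFAt 2 φ' w := by
  have hN' := card_neighborFinset_reduce_lt hw hs₀ hO₀ hO
  rw [IsPCFAt, ← card_neighborFinset_eq_degree]
  rw [← card_neighborFinset_eq_degree] at hdeg hN'
  set N := G.neighborFinset w
  set M := N \ S
  have hcard : #M + #(N ∩ S) = #N := card_sdiff_add_card_inter N S
  have hMinj : Set.InjOn φ M := (injOn_of_card_le_three (by omega) hred).mono (by
    rw [neighborFinset_reduce hw]; exact_mod_cast subset_union_left)
  have hsep : ∀ a ∈ N.erase s₀, a ∈ S → ∀ b ∈ M, φ' a ≠ φ b := by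
    intro a ha haS b hb h
    have haT : a ∈ (N ∩ S).erase s₀ :=
      mem_erase.2 ⟨ne_of_mem_erase ha, mem_inter.2 ⟨mem_of_mem_erase ha, haS⟩⟩
    have h₁ : #((N ∩ S).erase s₀) + 1 = #(N ∩ S) := card_erase_add_one hs₀
    have h₂ : 1 ≤ #((N ∩ S).erase s₀) := card_pos.2 ⟨a, haT⟩
    have h₃ : #(M.image φ) ≤ #M := card_image_le
    exact (hsafe a haT).resolve_right (by omega) (mem_image.2 ⟨b, hb, h.symm⟩)
  have hinjB : Set.InjOn φ' (N.erase s₀) := by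
    intro a ha b hb hab
    have hM : ∀ c ∈ N.erase s₀, c ∉ S → c ∈ M := fun c hc hcS =>
      mem_sdiff.2 ⟨mem_of_mem_erase hc, hcS⟩
    by_cases haS : a ∈ S <;> by_cases hbS : b ∈ S
    · exact hinj haS hbS hab
    · exact absurd (hab.trans (hφ' b hbS)) (hsep a ha haS b (hM b hb hbS))
    · exact absurd (hab.symm.trans (hφ' a haS)) (hsep b hb hbS a (hM a ha haS))
    · exact hMinj (hM a ha haS) (hM b hb hbS) (by rwa [hφ' a haS, hφ' b hbS] at hab)
  have := card_sub_card_sdiff_le_card_uniqueColors (erase_subset s₀ N) hinjB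
  rw [sdiff_erase_self (mem_of_mem_inter_left hs₀), card_singleton,
    card_erase_of_mem (mem_of_mem_inter_left hs₀)] at this
  omega

theorem isPCFAt_of_notMem {P : Finset V} {w : V} (hw : w ∉ S) (hφ' : ∀ a ∉ S, φ' a = φ a)
    (hinj : Set.InjOn φ' S) (hO : ∀ s ∈ S, #(G.neighborFinset s \ S) ≤ 2)
    (hΔ : G.degree w ≤ 4) (hred : (G.reduce S).IsPCFAt 2 φ w)
    (hP : ∀ s ∈ P, ∃ w₁, G.neighborFinset s \ S = {w₁} ∧ G.degree w₁ = 4)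
    (hPinj : ∀ s ∈ P, ∀ t ∈ P, G.neighborFinset s \ S = G.neighborFinset t \ S → s = t)
    (hsafe : ∀ s ∈ G.neighborFinset w ∩ S, s ∉ P →
      φ' s ∉ (G.neighborFinset w \ S).image φ ∨ 2 < #((G.neighborFinset w \ S).image φ)) :
    G.IsPCFAt 2 φ' w := by
  by_cases hpend : ∃ s₀ ∈ G.neighborFinset w ∩ S, s₀ ∈ P
  · obtain ⟨s₀, hs₀, hs₀P⟩ := hpend
    obtain ⟨w₁, hO₀, hdeg⟩ := hP s₀ hs₀P
    obtain rfl : w = w₁ := mem_singleton.1 (hO₀ ▸ mem_neighborFinset_sdiff_of_mem_inter hw hs₀)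
    refine isPCFAt_of_pendant hw hφ' hinj hs₀ hO₀ hO hdeg hred fun s hs =>
      hsafe s (mem_of_mem_erase hs) fun hsP => ?_
    obtain ⟨w₂, hO₂, -⟩ := hP s hsP
    obtain rfl : w = w₂ :=
      mem_singleton.1 (hO₂ ▸ mem_neighborFinset_sdiff_of_mem_inter hw (mem_of_mem_erase hs))
    exact ne_of_mem_erase hs (hPinj s hsP s₀ hs₀P (hO₂.trans hO₀.symm))
  · push Not at hpend
    exact isPCFAt_of_safe hw hφ' hinj hO hΔ hred fun s hs => hsafe s hs (hpend s hs)

end SimpleGraph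

/-- `F` collects the colours that a recoloured neighbour of a vertex with outside neighbourhood
`M` has to avoid. -/
theorem exists_card_le_two_forall_safe {V α : Type*} [DecidableEq α] (φ : V → α)
    (M : Finset V) : ∃ F : Finset α, #F ≤ 2 ∧ ∀ c ∉ F, c ∉ M.image φ ∨ 2 < #(M.image φ) := by
  by_cases h : #(M.image φ) ≤ 2
  · exact ⟨M.image φ, h, fun c hc => Or.inl hc⟩
  · exact ⟨∅, by simp, fun c _ => Or.inr (by omega)⟩

theorem exists_cycle_colors {V : Type*} (φ : V → Fin 9) (F : V → Finset (Fin 9))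
    (hF : ∀ w, #(F w) ≤ 2) (O : V → Finset V) {x y z u v : V} (hOx : #(O x) ≤ 2)
    (hOy : #(O y) ≤ 1) (hOz : #(O z) ≤ 1) (hOu : #(O u) ≤ 1) (hOv : #(O v) ≤ 2) :
    ∃ cx cy cz cu cv : Fin 9, [cx, cy, cz, cu, cv].Nodup ∧
      (cx ∉ (O x).image φ ∧ cx ∉ (O y).image φ ∧ ∀ w ∈ O x, cx ∉ F w) ∧
      (cy ∉ (O y).image φ ∧ cy ∉ (O x).image φ ∧ cy ∉ (O z).image φ) ∧
      (cz ∉ (O z).image φ ∧ cz ∉ (O y).image φ ∧ cz ∉ (O u).image φ ∧ ∀ w ∈ O z, cz ∉ F w) ∧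
      (cu ∉ (O u).image φ ∧ cu ∉ (O v).image φ ∧ cu ∉ (O z).image φ) ∧
      (cv ∉ (O v).image φ ∧ cv ∉ (O u).image φ ∧ ∀ w ∈ O v, cv ∉ F w) := by
  have pick : ∀ B : Finset (Fin 9), #B ≤ 8 → ∃ c, c ∉ B := fun B hB => by
    obtain ⟨c, -, hc⟩ := exists_mem_notMem_of_card_lt_card (s := B) (t := univ)
      (by rw [card_univ, Fintype.card_fin]; omega)
    exact ⟨c, hc⟩
  have hU : ∀ {s t : Finset (Fin 9)} {m n : ℕ}, #s ≤ m → #t ≤ n → #(s ∪ t) ≤ m + n :=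
    fun hs ht => (card_union_le _ _).trans (Nat.add_le_add hs ht)
  have hI : ∀ a, #((O a).image φ) ≤ #(O a) := fun _ => card_image_le
  have hB : ∀ a, #((O a).biUnion F) ≤ #(O a) * 2 :=
    fun a => card_biUnion_le_card_mul _ _ _ fun w _ => hF w
  obtain ⟨cx, hcx⟩ := pick ((O x).image φ ∪ (O y).image φ ∪ (O x).biUnion F)
    ((hU (hU (hI x) (hI y)) (hB x)).trans (by omega))
  obtain ⟨cv, hcv⟩ := pick ((O v).image φ ∪ (O u).image φ ∪ (O v).biUnion F ∪ {cx})
    ((hU (hU (hU (hI v) (hI u)) (hB v)) (card_singleton cx).le).trans (by omega))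
  obtain ⟨cz, hcz⟩ := pick ((O z).image φ ∪ (O y).image φ ∪ (O u).image φ ∪ (O z).biUnion F ∪
    {cx, cv}) ((hU (hU (hU (hU (hI z) (hI y)) (hI u)) (hB z)) card_le_two).trans (by omega))
  obtain ⟨cu, hcu⟩ := pick ((O u).image φ ∪ (O v).image φ ∪ (O z).image φ ∪ {cx, cv, cz})
    ((hU (hU (hU (hI u) (hI v)) (hI z)) card_le_three).trans (by omega))
  obtain ⟨cy, hcy⟩ := pick ((O y).image φ ∪ (O x).image φ ∪ (O z).image φ ∪ {cx, cv, cz, cu})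
    ((hU (hU (hU (hI y) (hI x)) (hI z)) card_le_four).trans (by omega))
  simp only [mem_union, mem_insert, mem_singleton, mem_biUnion, not_or, not_exists, not_and]
    at hcx hcv hcz hcu hcy
  obtain ⟨⟨hcxx, hcxy⟩, hcxF⟩ := hcx
  obtain ⟨⟨⟨hcvv, hcvu⟩, hcvF⟩, hcvx⟩ := hcv
  obtain ⟨⟨⟨⟨hczz, hczy⟩, hczu⟩, hczF⟩, hczx, hczv⟩ := hcz
  obtain ⟨⟨⟨hcuu, hcuv⟩, hcuz⟩, hcux, hcuv', hcuz'⟩ := hcu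
  obtain ⟨⟨⟨hcyy, hcyx⟩, hcyz⟩, hcyx', hcyv, hcyz', hcyu⟩ := hcy
  refine ⟨cx, cy, cz, cu, cv, ?_, ⟨hcxx, hcxy, hcxF⟩, ⟨hcyy, hcyx, hcyz⟩, ⟨hczz, hczy, hczu, hczF⟩,
    ⟨hcuu, hcuv, hcuz⟩, ⟨hcvv, hcvu, hcvF⟩⟩
  simp only [List.nodup_cons, List.mem_cons, List.not_mem_nil, List.nodup_nil]
  grind

theorem exists_map_eq_of_nodup₅ {V α : Type*} [DecidableEq V] (φ : V → α) {x y z u v : V}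
    (hdist : [x, y, z, u, v].Nodup) (cx cy cz cu cv : α) :
    ∃ φ' : V → α, [x, y, z, u, v].map φ' = [cx, cy, cz, cu, cv] ∧
      ∀ a ∉ [x, y, z, u, v], φ' a = φ a := by
  simp only [List.nodup_cons, List.mem_cons, List.not_mem_nil, or_false, not_or,
    List.nodup_nil, and_true] at hdist
  obtain ⟨⟨hxy, hxz, hxu, hxv⟩, ⟨hyz, hyu, hyv⟩, ⟨hzu, hzv⟩, huv, -⟩ := hdist
  refine ⟨fun a => if a = x then cx else if a = y then cy else if a = z then cz
    else if a = u then cu else if a = v then cv else φ a, ?_, ?_⟩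
  · simp [Ne.symm hxy, Ne.symm hxz, Ne.symm hxu, Ne.symm hxv, Ne.symm hyz, Ne.symm hyu,
      Ne.symm hyv, Ne.symm hzu, Ne.symm hzv, Ne.symm huv]
  · intro a ha
    simp only [List.mem_cons, List.not_mem_nil, or_false, not_or] at ha
    simp [ha]

theorem exists_cycle_recoloring {V : Type*} [DecidableEq V] (φ : V → Fin 9)
    (F : V → Finset (Fin 9)) (hF : ∀ w, #(F w) ≤ 2) (O : V → Finset V) {x y z u v : V}
    (hdist : [x, y, z, u, v].Nodup) (hOx : #(O x) ≤ 2) (hOy : #(O y) ≤ 1) (hOz : #(O z) ≤ 1)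
    (hOu : #(O u) ≤ 1) (hOv : #(O v) ≤ 2) :
    ∃ φ' : V → Fin 9, (∀ a ∉ ({x, y, z, u, v} : Finset V), φ' a = φ a) ∧
      Set.InjOn φ' ({x, y, z, u, v} : Finset V) ∧
      (∀ s ∈ ({x, y, z, u, v} : Finset V), φ' s ∉ (O s).image φ) ∧
      (∀ s ∈ ({x, z, v} : Finset V), ∀ w ∈ O s, φ' s ∉ F w) ∧
      φ' y ∉ (O x).image φ ∧ φ' x ∉ (O y).image φ ∧ φ' z ∉ (O y).image φ ∧
      φ' y ∉ (O z).image φ ∧ φ' u ∉ (O z).image φ ∧ φ' z ∉ (O u).image φ ∧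
      φ' v ∉ (O u).image φ ∧ φ' u ∉ (O v).image φ := by
  obtain ⟨cx, cy, cz, cu, cv, hc, hcx, hcy, hcz, hcu, hcv⟩ :=
    exists_cycle_colors φ F hF O hOx hOy hOz hOu hOv
  obtain ⟨φ', hmap, hφ'⟩ := exists_map_eq_of_nodup₅ φ hdist cx cy cz cu cv
  refine ⟨φ', fun a ha => hφ' a (by simpa using ha), fun a ha b hb =>
    List.inj_on_of_nodup_map (hmap ▸ hc) (by simpa using ha) (by simpa using hb), ?_⟩
  simp only [List.map_cons, List.map_nil, List.cons.injEq, and_true] at hmap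
  obtain ⟨rfl, rfl, rfl, rfl, rfl⟩ := hmap
  simp only [mem_insert, mem_singleton, forall_eq_or_imp, forall_eq]
  exact ⟨⟨hcx.1, hcy.1, hcz.1, hcu.1, hcv.1⟩, ⟨hcx.2.2, hcz.2.2.2, hcv.2.2⟩, hcy.2.1, hcx.2.1,
    hcz.2.1, hcy.2.2, hcu.2.2, hcz.2.2.1, hcv.2.1, hcu.2.1⟩

open SimpleGraph

theorem reduce_five_cycle_three_consecutive_three_vertices {V : Type*} [Fintype V]
    (G : SimpleGraph V)
    (hΔ : ∀ a : V, {b | G.Adj a b}.ncard ≤ 4)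
    (htf : G.CliqueFree 3)
    (x y z u v y₁ u₁ : V)
    (hxy : G.Adj x y) (hyz : G.Adj y z) (hzu : G.Adj z u)
    (huv : G.Adj u v) (hvx : G.Adj v x)
    (hdist : List.Pairwise (· ≠ ·) [x, y, z, u, v])
    (hdy : {a | G.Adj y a}.ncard = 3)
    (hdz : {a | G.Adj z a}.ncard = 3)
    (hdu : {a | G.Adj u a}.ncard = 3)
    (hdx : {a | G.Adj x a}.ncard = 4)
    (hdv : {a | G.Adj v a}.ncard = 4)
    (hyy₁ : G.Adj y y₁) (huu₁ : G.Adj u u₁)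
    (hy₁ : y₁ ∉ ({x, y, z, u, v} : Set V))
    (hu₁ : u₁ ∉ ({x, y, z, u, v} : Set V))
    (hy₁u₁ : y₁ ≠ u₁)
    (hdy₁ : {a | G.Adj y₁ a}.ncard = 4)
    (hdu₁ : {a | G.Adj u₁ a}.ncard = 4)
    (h : (G.reduce {x, y, z, u, v}).HasPCFColoring 2 9) :
    G.HasPCFColoring 2 9 := by
  classical
  set S : Finset V := {x, y, z, u, v} with hS
  have hSset : ({x, y, z, u, v} : Set V) = ↑S := by simp [S]
  obtain ⟨φ, hφ⟩ := h
  rw [hSset, isPCFColoring_iff] at hφ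
  rw [hSset, mem_coe] at hy₁ hu₁
  simp only [ncard_setOf_adj] at hΔ hdy hdz hdu hdx hdv hdy₁ hdu₁
  have hne := hdist
  simp only [List.pairwise_cons, List.mem_cons, List.not_mem_nil, or_false, forall_eq_or_imp,
    forall_eq, List.Pairwise.nil, and_true] at hne
  obtain ⟨⟨-, hxz, hxu, -⟩, ⟨-, hyu, hyv⟩, ⟨-, hzv⟩, -⟩ := hne
  obtain ⟨hTx, hTy, hTz, hTu, hTv⟩ := neighborFinset_inter_eq_of_cycle₅ htf hxy hyz hzu huv hvx hS
  rw [pair_comm] at hTv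
  have hOx := card_sdiff_add_two_of_inter_eq_pair hTx hyv
  have hOz := card_sdiff_add_two_of_inter_eq_pair hTz hyu.symm
  have hOv := card_sdiff_add_two_of_inter_eq_pair hTv hxu.symm
  have hOy := sdiff_eq_singleton_of_inter_eq_pair hTy hxz.symm hdy hyy₁ hy₁
  have hOu := sdiff_eq_singleton_of_inter_eq_pair hTu hzv.symm hdu huu₁ hu₁
  have hO : ∀ s ∈ S, #(G.neighborFinset s \ S) ≤ 2 := by
    intro s hs
    obtain rfl | rfl | rfl | rfl | rfl : s = x ∨ s = y ∨ s = z ∨ s = u ∨ s = v := by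
      simpa [S] using hs
    exacts [by omega, by simp [hOy], by omega, by simp [hOu], by omega]
  choose F hF₂ hF using fun w => exists_card_le_two_forall_safe φ (G.neighborFinset w \ S)
  obtain ⟨φ', hφ', hinj, hcross, hsafe, hyx, hxy', hzy, hyz', huz, hzu', hvu, huv'⟩ :=
    exists_cycle_recoloring φ F hF₂ (fun s => G.neighborFinset s \ S) hdist (by omega)
      (by simp [hOy]) (by omega) (by simp [hOu]) (by omega)
  refine ⟨φ', isPCFColoring_iff.2 ⟨adj_ne_of_reduce hφ.1 hφ' hinj hcross, fun w => ?_⟩⟩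
  by_cases hwS : w ∈ S
  · have hw := hwS
    simp only [S, mem_insert, mem_singleton] at hw
    rcases hw with rfl | rfl | rfl | rfl | rfl
    · exact isPCFAt_of_inter_eq_pair hwS hφ.1 hφ' hinj hTx hyv hyx (Or.inr hdx.ge)
    · exact isPCFAt_of_inter_eq_pair hwS hφ.1 hφ' hinj hTy hxz.symm hzy (Or.inl hxy')
    · exact isPCFAt_of_inter_eq_pair hwS hφ.1 hφ' hinj hTz hyu.symm huz (Or.inl hyz')
    · exact isPCFAt_of_inter_eq_pair hwS hφ.1 hφ' hinj hTu hzv.symm hvu (Or.inl hzu')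
    · exact isPCFAt_of_inter_eq_pair hwS hφ.1 hφ' hinj hTv hxu.symm huv' (Or.inr hdv.ge)
  refine isPCFAt_of_notMem hwS hφ' hinj hO (hΔ w) (hφ.2 w) (P := {y, u}) ?_ ?_
    fun s hs hsP => hF w _ (hsafe s ?_ w (mem_neighborFinset_sdiff_of_mem_inter hwS hs))
  · simpa using ⟨⟨y₁, hOy, hdy₁⟩, ⟨u₁, hOu, hdu₁⟩⟩
  · simp [hOy, hOu, hy₁u₁, hy₁u₁.symm]
  · have hsS := (mem_inter.1 hs).2
    simp only [S, mem_insert, mem_singleton] at hsS hsP ⊢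
    rcases hsS with h | h | h | h | h
    exacts [Or.inl h, absurd (Or.inl h) hsP, Or.inr (Or.inl h), absurd (Or.inr h) hsP,
      Or.inr (Or.inr h)]
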